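/- arXiv:math/0504068 — 2 statements merged into one kernel-verified Lean document; each statement's English description precedes it below -/
import Mathlib

section
/- If R is a right noetherian and left P-injective ring, then J(R) equals the left singular ideal Z_l(R) = {a in R : l(a) is an essential left ideal of R}. -/
open MulOpposite in
/-- Right ideals of `R`, as submodules of `R` over `Rᵐᵒᵖ`. -/
abbrev RIdeal (R : Type*) [Ring R] := Submodule Rᵐᵒᵖ R

section Defs
variable (R : Type*) [Ring R]

/-- Left annihilator of a subset. -/
def lAnn (X : Set R) : Set R := {a | ∀ x ∈ X, a * x = 0}

/-- Right annihilator of a subset. -/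
def rAnn (X : Set R) : Set R := {a | ∀ x ∈ X, x * a = 0}

/-- Right annihilator of a subset, as a right ideal. -/
def rAnnI (X : Set R) : RIdeal R where
  carrier := rAnn R X
  add_mem' := by intro a b ha hb x hx; rw [mul_add, ha x hx, hb x hx, add_zero]
  zero_mem' := by intro x hx; rw [mul_zero]
  smul_mem' := by
    intro c a ha x hx
    show x * (a * c.unop) = 0
    rw [← mul_assoc, ha x hx, zero_mul]

/-- `R` is left P-injective: `rl(a) = aR` for every `a`. -/
def IsLeftPInjective : Prop :=
  ∀ a x : R, (∀ u : R, u * a = 0 → u * x = 0) ↔ ∃ s : R, x = a * s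

/-- `R` is left 2-injective. -/
def IsLeft2Injective : Prop :=
  ∀ (a b : R) (f : ↥(Submodule.span R ({a, b} : Set R)) →ₗ[R] R),
    ∃ g : R →ₗ[R] R, ∀ x : ↥(Submodule.span R ({a, b} : Set R)), g (x : R) = f x

/-- `R` is left FP-injective: every matrix ring over `R` is left P-injective. -/
def IsLeftFPInjective : Prop :=
  ∀ n : ℕ, IsLeftPInjective (Matrix (Fin n) (Fin n) R)

/-- A left ideal is small if `K + I = R` implies `K = R`. -/
def IsSmallLeftIdeal (I : Ideal R) : Prop := ∀ K : Ideal R, K ⊔ I = ⊤ → K = ⊤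

/-- A complement left ideal: maximal with respect to intersecting some left ideal trivially. -/
def IsComplementLeftIdeal (C : Ideal R) : Prop :=
  ∃ S : Ideal R, C ⊓ S = ⊥ ∧ ∀ C' : Ideal R, C ≤ C' → C' ⊓ S = ⊥ → C' = C

/-- A right ideal is essential in `R`. -/
def IsEssentialRIdeal (I : RIdeal R) : Prop := ∀ K : RIdeal R, K ⊓ I = ⊥ → K = ⊥

/-- The right socle: the sum of all simple (minimal) right ideals. -/
def rSocle : RIdeal R := sSup {m : RIdeal R | IsSimpleModule Rᵐᵒᵖ m}

/-- The right singular ideal. -/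
def rSingular : Set R := {a | IsEssentialRIdeal R (rAnnI R {a})}

/-- ACC on right annihilators. -/
def ACCOnRightAnnihilators : Prop :=
  ∀ f : ℕ → Set R, (∀ n, ∃ X : Set R, f n = rAnn R X) → (∀ n, f n ⊆ f (n + 1)) →
    ∃ n, ∀ m, n ≤ m → f m = f n

/-- The Jacobson radical, as a set. -/
def jacobsonSet : Set R := (TwoSidedIdeal.jacobson (⊥ : TwoSidedIdeal R) : Set R)

/-- A subset is nilpotent if products of some fixed length of its elements vanish. -/
def IsNilpotentSet (J : Set R) : Prop :=
  ∃ n : ℕ, ∀ f : Fin (n + 1) → R, (∀ i, f i ∈ J) → (List.ofFn f).prod = 0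

/-- `R` is quasi-Frobenius: left noetherian and left self-injective. -/
def IsQuasiFrobenius : Prop := IsNoetherianRing R ∧ Module.Injective R R

/-- `R` is right mininjective. -/
def IsRightMininjective : Prop :=
  ∀ (I : RIdeal R), IsSimpleModule Rᵐᵒᵖ I → ∀ f : I →ₗ[Rᵐᵒᵖ] R,
    ∃ c : R, ∀ x : I, f x = c * (x : R)

/-- `R` is left mininjective. -/
def IsLeftMininjective : Prop :=
  ∀ (I : Ideal R), IsSimpleModule R I → ∀ f : I →ₗ[R] R,
    ∃ c : R, ∀ x : I, f x = (x : R) * c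

/-- `R` is right simple injective. -/
def IsRightSimpleInjective : Prop :=
  ∀ (I : RIdeal R) (f : I →ₗ[Rᵐᵒᵖ] R), IsSimpleModule Rᵐᵒᵖ (LinearMap.range f) →
    ∃ c : R, ∀ x : I, f x = c * (x : R)

/-- `R` is left CS: every left ideal is essential in a direct summand of `R`. -/
def IsLeftCS : Prop :=
  ∀ I : Ideal R, ∃ K : Ideal R, (∃ K' : Ideal R, IsCompl K K') ∧ I ≤ K ∧
    ∀ L : Ideal R, L ≤ K → L ⊓ I = ⊥ → L = ⊥

/-- `R` is left min-CS: every minimal left ideal is essential in a direct summand. -/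
def IsLeftMinCS : Prop :=
  ∀ I : Ideal R, IsSimpleModule R I → ∃ K : Ideal R, (∃ K' : Ideal R, IsCompl K K') ∧ I ≤ K ∧
    ∀ L : Ideal R, L ≤ K → L ⊓ I = ⊥ → L = ⊥

/-- `R` is right Johns: right noetherian and every right ideal is a right annihilator. -/
def IsRightJohns : Prop :=
  IsNoetherianRing Rᵐᵒᵖ ∧ ∀ I : RIdeal R, ∃ X : Set R, (I : Set R) = rAnn R X

end Defs

section MoreDefs
variable (R : Type*) [Ring R]

/-- Left annihilator of a subset, as a left ideal. -/
def lAnnI (X : Set R) : Ideal R where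
  carrier := lAnn R X
  add_mem' := by intro a b ha hb x hx; rw [add_mul, ha x hx, hb x hx, add_zero]
  zero_mem' := by intro x hx; rw [zero_mul]
  smul_mem' := by
    intro c a ha x hx
    show c * a * x = 0
    rw [mul_assoc, ha x hx, mul_zero]

/-- A left ideal is essential in `R`. -/
def IsEssentialLIdeal (I : Ideal R) : Prop := ∀ K : Ideal R, K ⊓ I = ⊥ → K = ⊥

/-- The left singular ideal `Z_l`. -/
def lSingular : Set R := {a | IsEssentialLIdeal R (lAnnI R {a})}

end MoreDefs

section Aux
variable {R : Type*} [Ring R]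

lemma mem_lAnnI_singleton {a u : R} : u ∈ lAnnI R {a} ↔ u * a = 0 := by
  constructor
  · intro h; exact h a rfl
  · rintro h x rfl; exact h

/-- Elementwise characterization of essentiality. -/
lemma isEssentialLIdeal_iff {I : Ideal R} :
    IsEssentialLIdeal R I ↔ ∀ x : R, x ≠ 0 → ∃ r : R, r * x ≠ 0 ∧ r * x ∈ I := by
  constructor
  · intro hI x hx
    by_contra hcon
    push_neg at hcon
    have hK : Submodule.span R ({x} : Set R) ⊓ I = ⊥ := by
      rw [eq_bot_iff]
      intro y hy
      rw [Submodule.mem_inf] at hy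
      obtain ⟨hy1, hy2⟩ := hy
      obtain ⟨r, rfl⟩ := Submodule.mem_span_singleton.mp hy1
      rw [smul_eq_mul] at hy2 ⊢
      rw [Submodule.mem_bot]
      by_contra h0
      exact hcon r h0 hy2
    have hb := hI _ hK
    have hxmem : x ∈ (⊥ : Ideal R) := hb ▸ Submodule.mem_span_singleton_self x
    exact hx (by simpa using hxmem)
  · intro hE K hK
    rw [eq_bot_iff]
    intro x hx
    rw [Submodule.mem_bot]
    by_contra hx0
    obtain ⟨r, hr0, hrI⟩ := hE x hx0
    have hrK : r * x ∈ K := by simpa [smul_eq_mul] using K.smul_mem r hx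
    have : r * x ∈ K ⊓ I := Submodule.mem_inf.mpr ⟨hrK, hrI⟩
    rw [hK] at this
    exact hr0 (by simpa using this)

lemma lSingular_mul_right {a : R} (ha : a ∈ lSingular R) (y : R) :
    a * y ∈ lSingular R := by
  intro K hK
  apply ha K
  rw [eq_bot_iff, ← hK]
  refine inf_le_inf_left K ?_
  intro u hu
  rw [mem_lAnnI_singleton] at hu ⊢
  rw [← mul_assoc, hu, zero_mul]

lemma lSingular_mul_left {a : R} (ha : a ∈ lSingular R) (y : R) :
    y * a ∈ lSingular R := by
  have ha' : IsEssentialLIdeal R (lAnnI R {a}) := ha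
  show IsEssentialLIdeal R (lAnnI R {y * a})
  rw [isEssentialLIdeal_iff] at ha' ⊢
  intro x hx
  by_cases hxy : x * y = 0
  · exact ⟨1, by simpa using hx, by rw [mem_lAnnI_singleton, one_mul, ← mul_assoc, hxy, zero_mul]⟩
  · obtain ⟨r, hr0, hrI⟩ := ha' (x * y) hxy
    rw [mem_lAnnI_singleton] at hrI
    refine ⟨r, fun h => hr0 ?_, ?_⟩
    · rw [← mul_assoc, h, zero_mul]
    · rw [mem_lAnnI_singleton, mul_assoc, ← mul_assoc x, ← mul_assoc, hrI]

lemma lSingular_neg {a : R} (ha : a ∈ lSingular R) : -a ∈ lSingular R := by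
  intro K hK
  apply ha K
  rw [eq_bot_iff, ← hK]
  refine inf_le_inf_left K ?_
  intro u hu
  rw [mem_lAnnI_singleton] at hu ⊢
  rw [mul_neg, hu, neg_zero]

/-- For `a ∈ Z_l`, `1 - a` has a right inverse (P-injectivity). -/
lemma right_inv_of_lSingular (hP : IsLeftPInjective R) {a : R} (ha : a ∈ lSingular R) :
    ∃ s : R, (1 - a) * s = 1 := by
  have ha' : IsEssentialLIdeal R (lAnnI R {a}) := ha
  rw [isEssentialLIdeal_iff] at ha'
  have hann : ∀ u : R, u * (1 - a) = 0 → u = 0 := by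
    intro u hu
    have hua : u = u * a := by
      rw [mul_sub, mul_one, sub_eq_zero] at hu
      exact hu
    by_contra hu0
    obtain ⟨r, hr0, hrI⟩ := ha' u hu0
    rw [mem_lAnnI_singleton] at hrI
    exact hr0 (by rw [hua, ← mul_assoc]; exact hrI)
  obtain ⟨s, hs⟩ := (hP (1 - a) 1).mp (fun u hu => by rw [mul_one]; exact hann u hu)
  exact ⟨s, hs.symm⟩

/-- For `a ∈ Z_l`, `1 - a` is a unit. -/
lemma isUnit_one_sub_of_lSingular (hP : IsLeftPInjective R) {a : R} (ha : a ∈ lSingular R) :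
    IsUnit (1 - a) := by
  obtain ⟨s, hs⟩ := right_inv_of_lSingular hP ha
  have h := hs
  rw [sub_mul, one_mul] at h
  have hsform : s = 1 - (-(a * s)) := by
    rw [sub_neg_eq_add]
    exact (sub_eq_iff_eq_add.mp h)
  have hmem : -(a * s) ∈ lSingular R := lSingular_neg (lSingular_mul_right ha s)
  obtain ⟨t, ht⟩ := right_inv_of_lSingular hP hmem
  rw [← hsform] at ht
  have h1at : 1 - a = t := by
    calc 1 - a = (1 - a) * (s * t) := by rw [ht, mul_one]
    _ = ((1 - a) * s) * t := by rw [mul_assoc]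
    _ = t := by rw [hs, one_mul]
  exact ⟨⟨1 - a, s, hs, by rw [h1at]; exact ht⟩, rfl⟩

set_option maxHeartbeats 1000000 in
lemma mem_jacobsonSet_of_forall_isUnit {a : R} (h : ∀ y : R, IsUnit (1 + y * a)) :
    a ∈ jacobsonSet R := by
  unfold jacobsonSet
  rw [SetLike.mem_coe, TwoSidedIdeal.mem_jacobson_iff]
  intro y
  obtain ⟨u, hu⟩ := h y
  refine ⟨↑u⁻¹, ?_⟩
  rw [TwoSidedIdeal.mem_bot]
  have hz : (↑u⁻¹ : R) * (1 + y * a) = 1 := by rw [← hu]; exact u.inv_mul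
  rw [mul_add, mul_one] at hz
  rw [mul_assoc, sub_eq_zero, add_comm]
  exact hz

lemma jac_left_inv {c : R} (hc : c ∈ TwoSidedIdeal.jacobson (⊥ : TwoSidedIdeal R)) :
    ∃ z : R, z * (1 + c) = 1 := by
  obtain ⟨z, hz⟩ := TwoSidedIdeal.mem_jacobson_iff.mp hc 1
  rw [TwoSidedIdeal.mem_bot, mul_one, sub_eq_zero] at hz
  exact ⟨z, by rw [mul_add, mul_one, add_comm]; exact hz⟩

lemma isUnit_one_add_of_mem_jac {c : R}
    (hc : c ∈ TwoSidedIdeal.jacobson (⊥ : TwoSidedIdeal R)) : IsUnit (1 + c) := by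
  obtain ⟨z, hz⟩ := jac_left_inv hc
  have hzform : z = 1 + -(z * c) := by
    have h' := hz
    rw [mul_add, mul_one] at h'
    rw [← sub_eq_add_neg, eq_sub_iff_add_eq]
    exact h'
  have hzc : -(z * c) ∈ TwoSidedIdeal.jacobson (⊥ : TwoSidedIdeal R) :=
    TwoSidedIdeal.neg_mem _ (TwoSidedIdeal.mul_mem_left _ z c hc)
  obtain ⟨w, hw⟩ := jac_left_inv hzc
  rw [← hzform] at hw
  have hwc : w = 1 + c := by
    calc w = w * (z * (1 + c)) := by rw [hz, mul_one]
    _ = (w * z) * (1 + c) := (mul_assoc _ _ _).symm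
    _ = 1 + c := by rw [hw, one_mul]
  exact ⟨⟨1 + c, z, by rw [← hwc]; exact hw, hz⟩, rfl⟩

set_option maxHeartbeats 1000000 in
lemma isUnit_of_mem_jacobsonSet {a : R} (h : a ∈ jacobsonSet R) (y : R) :
    IsUnit (a * y + 1) := by
  unfold jacobsonSet at h
  have h1 : a ∈ TwoSidedIdeal.jacobson (⊥ : TwoSidedIdeal R) := SetLike.mem_coe.mp h
  have h2 : a * y ∈ TwoSidedIdeal.jacobson (⊥ : TwoSidedIdeal R) :=
    TwoSidedIdeal.mul_mem_right _ a y h1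
  have := isUnit_one_add_of_mem_jac h2
  rwa [add_comm] at this

end Aux


/-- Right noetherian left P-injective: `J = Z_l`. -/
theorem stmt4 {R : Type*} [Ring R] [IsNoetherianRing Rᵐᵒᵖ] (hP : IsLeftPInjective R) :
    jacobsonSet R = lSingular R := by
  apply Set.eq_of_subset_of_subset
  · -- J ⊆ Z_l
    intro a ha
    intro K hK
    rw [eq_bot_iff]
    intro b hb
    rw [Submodule.mem_bot]
    have hann : ∀ u : R, u * (b * a) = 0 → u * b = 0 := by
      intro u hu
      have h1 : u * b ∈ K := by simpa [smul_eq_mul] using K.smul_mem u hb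
      have h2 : u * b ∈ lAnnI R {a} := by
        rw [mem_lAnnI_singleton, mul_assoc]; exact hu
      have hmem : u * b ∈ K ⊓ lAnnI R {a} := Submodule.mem_inf.mpr ⟨h1, h2⟩
      rw [hK] at hmem
      simpa using hmem
    obtain ⟨s, hs⟩ := (hP (b * a) b).mp hann
    have hb0 : b * (1 - a * s) = 0 := by
      rw [mul_sub, mul_one, sub_eq_zero, ← mul_assoc]
      exact hs
    have hunit : IsUnit (1 - a * s) := by
      have hu := isUnit_of_mem_jacobsonSet ha (-s)
      have he : a * (-s) + 1 = 1 - a * s := by rw [mul_neg, neg_add_eq_sub]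
      rwa [he] at hu
    obtain ⟨u, hu⟩ := hunit
    calc b = b * ((1 - a * s) * ↑u⁻¹) := by rw [← hu, u.mul_inv, mul_one]
    _ = (b * (1 - a * s)) * ↑u⁻¹ := by rw [mul_assoc]
    _ = 0 := by rw [hb0, zero_mul]
  · -- Z_l ⊆ J
    intro a ha
    apply mem_jacobsonSet_of_forall_isUnit
    intro y
    have hmem : -(y * a) ∈ lSingular R := lSingular_neg (lSingular_mul_left ha y)
    have hu := isUnit_one_sub_of_lSingular hP hmem
    rwa [sub_neg_eq_add] at hu
end

section
/- If R is a right mininjective ring with ACC on right annihilators in which the right socle S_r is essential in R as a right R-module, then R/J(R) is a von Neumann regular ring. -/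
/-!
By ACC on right annihilators choose a finite set `F` of generators of minimal right ideals for
which `lAnn F` is minimal; then `lAnn F ⊆ lAnn k` for every such generator `k`, so `I = lAnn F`
kills the right socle. An element killing the essential socle is nilpotent (the chain
`rAnn (w ^ n)` stabilises), hence `I` is a nil left ideal and lies in `J(R)`. Mininjectivity
makes `lAnn k` a maximal left ideal, so `R ⧸ I` embeds in a finite product of simple modules and
is semisimple; splitting `Ra` off in `R ⧸ I` gives `a - a b a ∈ I`.
-/

open Submodule MulOpposite

section Semisimple

variable {R M : Type*} [Ring R] [AddCommGroup M] [Module R M]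

theorem isSemisimpleModule_quotient_iInf_of_isCoatom {ι : Type*} [Finite ι]
    {p : ι → Submodule R M} (hp : ∀ i, IsCoatom (p i)) :
    IsSemisimpleModule R (M ⧸ ⨅ i, p i) := by
  have (i : ι) : IsSimpleModule R (M ⧸ p i) := isSimpleModule_iff_isCoatom.mpr (hp i)
  let f : M →ₗ[R] Π i, M ⧸ p i := LinearMap.pi fun i ↦ (p i).mkQ
  have hker : ⨅ i, p i = LinearMap.ker f := by
    ext x
    simp [f, funext_iff]
  exact .of_injective _ (LinearMap.ker_eq_bot.mp (ker_liftQ_eq_bot' _ f hker))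

theorem exists_sub_mul_mul_mem_of_isSemisimpleModule (I : Ideal R)
    [IsSemisimpleModule R (R ⧸ I)] (a : R) : ∃ b, a - a * b * a ∈ I := by
  obtain ⟨Q, hQ⟩ := exists_isCompl ((span R {a}).map I.mkQ)
  obtain ⟨_, ⟨_, hy, rfl⟩, q, hq, hyq⟩ :=
    mem_sup.mp (hQ.sup_eq_top ▸ mem_top : I.mkQ 1 ∈ (span R {a}).map I.mkQ ⊔ Q)
  obtain ⟨b, rfl⟩ := mem_span_singleton.mp hy
  refine ⟨b, (Quotient.mk_eq_zero I).mp <| (mem_bot R).mp (hQ.inf_eq_bot ▸ ⟨?_, ?_⟩)⟩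
  · exact ⟨(1 - a * b) • a, mem_span_singleton.mpr ⟨_, rfl⟩, by simp [sub_mul, mul_assoc]⟩
  · have : a • q = Submodule.Quotient.mk (a - a * b * a) := by
      rw [eq_sub_of_add_eq' hyq, smul_sub, ← map_smul, ← map_smul, ← map_sub]
      simp [mul_assoc]
    exact this ▸ Q.smul_mem a hq

end Semisimple

theorem TwoSidedIdeal.mem_jacobson_bot_of_forall_isNilpotent_mul {R : Type*} [Ring R] {x : R}
    (h : ∀ y, IsNilpotent (y * x)) : x ∈ TwoSidedIdeal.jacobson (⊥ : TwoSidedIdeal R) := by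
  refine TwoSidedIdeal.mem_jacobson_iff.mpr fun y ↦ ?_
  obtain ⟨u, hu⟩ := (h y).isUnit_add_one
  refine ⟨↑u⁻¹, (TwoSidedIdeal.mem_bot R).mpr ?_⟩
  calc (↑u⁻¹ : R) * y * x + ↑u⁻¹ - 1 = ↑u⁻¹ * (y * x + 1) - 1 := by noncomm_ring
    _ = 0 := by rw [← hu, Units.inv_mul, sub_self]

section RightSocle

variable {R : Type*} [Ring R]

theorem mem_span_op_singleton {k x : R} : x ∈ span Rᵐᵒᵖ {k} ↔ ∃ s, k * s = x := by
  simp [mem_span_singleton, MulOpposite.exists]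

theorem lAnnI_eq_iInf (X : Set R) : lAnnI R X = ⨅ x : X, lAnnI R {x.1} := by
  ext a
  simp [lAnnI, lAnn]

theorem span_op_singleton_eq_of_isSimpleModule {m : RIdeal R} (hm : IsSimpleModule Rᵐᵒᵖ m)
    {k : R} (hk : k ∈ m) (hk0 : k ≠ 0) : span Rᵐᵒᵖ {k} = m :=
  (isSimpleModule_iff_isAtom.mp hm).le_iff.mp ((span_singleton_le_iff_mem k m).mpr hk)
    |>.resolve_left (by simpa using hk0)

theorem rSocle_le_rAnnI {x : R}
    (hx : ∀ k, IsSimpleModule Rᵐᵒᵖ (span Rᵐᵒᵖ {k}) → x * k = 0) : rSocle R ≤ rAnnI R {x} := by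
  refine sSup_le fun m hm k hk y (hy : y = x) ↦ hy ▸ ?_
  obtain rfl | hk0 := eq_or_ne k 0
  · exact mul_zero x
  · exact hx k (span_op_singleton_eq_of_isSimpleModule hm hk hk0 ▸ hm)

end RightSocle

section Mininjective

variable {R : Type*} [Ring R]

/-- Left multiplication by `s` maps the simple right ideal `kR` isomorphically onto `skR`;
mininjectivity extends the inverse isomorphism to a left multiplication `c * ·`. -/
theorem IsRightMininjective.exists_mul_mul_eq (hmin : IsRightMininjective R) {k s : R}
    (hk : IsSimpleModule Rᵐᵒᵖ (span Rᵐᵒᵖ {k})) (hsk : s * k ≠ 0) : ∃ c, c * (s * k) = k := by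
  let g : span Rᵐᵒᵖ {k} →ₗ[Rᵐᵒᵖ] R := LinearMap.mulLeft Rᵐᵒᵖ s ∘ₗ (span Rᵐᵒᵖ {k}).subtype
  let k' : span Rᵐᵒᵖ {k} := ⟨k, mem_span_singleton_self k⟩
  have hg : Function.Injective g := g.injective_or_eq_zero.resolve_right fun h ↦
    hsk (by simpa [g, k'] using LinearMap.congr_fun h k')
  let e := LinearEquiv.ofInjective g hg
  have : IsSimpleModule Rᵐᵒᵖ (LinearMap.range g) := .congr e.symm
  obtain ⟨c, hc⟩ := hmin _ this ((span Rᵐᵒᵖ {k}).subtype ∘ₗ e.symm.toLinearMap)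
  exact ⟨c, by simpa [k', e, g] using (hc (e k')).symm⟩

theorem IsRightMininjective.isCoatom_lAnnI (hmin : IsRightMininjective R) {k : R}
    (hk : IsSimpleModule Rᵐᵒᵖ (span Rᵐᵒᵖ {k})) : IsCoatom (lAnnI R {k}) := by
  refine ⟨fun htop ↦ ?_, fun J hJ ↦ ?_⟩
  · have hk0 : k ≠ 0 := fun h ↦ (isSimpleModule_iff_isAtom.mp hk).1 (by simp [h])
    exact hk0 (by simpa using (htop ▸ mem_top : (1 : R) ∈ lAnnI R {k}) k rfl)
  · obtain ⟨s, hsJ, hs⟩ := SetLike.exists_of_lt hJ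
    obtain ⟨c, hc⟩ := hmin.exists_mul_mul_eq hk fun h ↦ hs fun _ hx ↦ hx ▸ h
    have hcs : 1 - c * s ∈ lAnnI R {k} := fun _ hx ↦ by
      rw [hx, sub_mul, one_mul, mul_assoc, hc, sub_self]
    exact J.eq_top_iff_one.mpr (by simpa using J.add_mem (hJ.le hcs) (J.smul_mem c hsJ))

end Mininjective

section Chain

variable {R : Type*} [Ring R]

theorem ACCOnRightAnnihilators.wellFoundedGT (hacc : ACCOnRightAnnihilators R) :
    WellFoundedGT {A : Set R // ∃ X, A = rAnn R X} :=
  wellFoundedGT_iff_monotone_chain_condition.mpr fun a ↦ by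
    obtain ⟨n, hn⟩ := hacc (fun n ↦ (a n).1) (fun n ↦ (a n).2) fun n ↦ a.monotone n.le_succ
    exact ⟨n, fun m hm ↦ Subtype.ext (hn m hm).symm⟩

/-- The chain `rAnn (w ^ (n + 1))` stabilises, so `w ^ (n + 1) R` meets the socle, which `w`
kills, trivially. -/
theorem isNilpotent_of_rSocle_le_rAnnI (hacc : ACCOnRightAnnihilators R)
    (hess : IsEssentialRIdeal R (rSocle R)) {w : R} (hw : rSocle R ≤ rAnnI R {w}) :
    IsNilpotent w := by
  obtain ⟨n, hn⟩ := hacc (fun m ↦ rAnn R {w ^ (m + 1)}) (fun m ↦ ⟨_, rfl⟩)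
    fun m x hx _ (hy : _ = _) ↦ by rw [hy, pow_succ', mul_assoc, hx _ rfl, mul_zero]
  have hbot : span Rᵐᵒᵖ {w ^ (n + 1)} ⊓ rSocle R = ⊥ := by
    refine eq_bot_iff.mpr ?_
    rintro _ ⟨hx, hxs⟩
    obtain ⟨s, rfl⟩ := mem_span_op_singleton.mp hx
    have hs : s ∈ rAnn R {w ^ (n + 1 + 1)} := fun _ (hy : _ = _) ↦ by
      rw [hy, pow_succ', mul_assoc]
      exact hw hxs w rfl
    exact (mem_bot _).mpr ((hn (n + 1) n.le_succ ▸ hs) _ rfl)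
  exact ⟨n + 1, by simpa using (hess _ hbot).le (mem_span_singleton_self _)⟩

theorem lAnn_rAnn_lAnn (X : Set R) : lAnn R (rAnn R (lAnn R X)) = lAnn R X :=
  Set.Subset.antisymm (fun _ hb x hx ↦ hb x fun _ hc ↦ hc x hx) fun _ ha _ hy ↦ hy _ ha

theorem exists_finset_lAnn_subset_lAnn (hacc : ACCOnRightAnnihilators R) :
    ∃ F : Finset R, (∀ k ∈ F, IsSimpleModule Rᵐᵒᵖ (span Rᵐᵒᵖ {k})) ∧
      ∀ k, IsSimpleModule Rᵐᵒᵖ (span Rᵐᵒᵖ {k}) → lAnn R F ⊆ lAnn R {k} := by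
  classical
  let f (F : {F : Finset R // ∀ k ∈ F, IsSimpleModule Rᵐᵒᵖ (span Rᵐᵒᵖ {k})}) :
      {A : Set R // ∃ X, A = rAnn R X} := ⟨rAnn R (lAnn R F), _, rfl⟩
  obtain ⟨F, -, hF⟩ := (hacc.wellFoundedGT.wf.onFun (f := f)).has_min Set.univ
    ⟨⟨∅, by simp⟩, trivial⟩
  refine ⟨F.1, F.2, fun k hk ↦ ?_⟩
  let G : {F : Finset R // ∀ k ∈ F, IsSimpleModule Rᵐᵒᵖ (span Rᵐᵒᵖ {k})} :=
    ⟨insert k F.1, Finset.forall_mem_insert _ _ _ |>.mpr ⟨hk, F.2⟩⟩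
  have hGF : lAnn R G.1 ⊆ lAnn R F.1 := fun a ha x hx ↦ ha x (Finset.mem_insert_of_mem hx)
  have hfFG : f F = f G :=
    eq_of_le_of_not_lt (fun b hb a ha ↦ hb a (hGF ha)) (hF G trivial)
  calc lAnn R F.1 = lAnn R G.1 := by
        simpa only [f, lAnn_rAnn_lAnn] using congrArg (lAnn R ·.1) hfFG
    _ ⊆ lAnn R {k} := fun a ha x (hx : x = k) ↦ ha x (by simp [G, hx])

end Chain

/-- Right mininjective with ACC on right annihilators and essential right socle:
`R/J` is von Neumann regular. -/
theorem stmt14 {R : Type*} [Ring R] (hmin : IsRightMininjective R)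
    (hacc : ACCOnRightAnnihilators R) (hess : IsEssentialRIdeal R (rSocle R)) :
    ∀ a : R, ∃ b : R, a - a * b * a ∈ jacobsonSet R := by
  obtain ⟨F, hF, hFmin⟩ := exists_finset_lAnn_subset_lAnn hacc
  set I := lAnnI R F
  have hIJ : ∀ x ∈ I, x ∈ jacobsonSet R := fun x hx ↦
    TwoSidedIdeal.mem_jacobson_bot_of_forall_isNilpotent_mul fun y ↦
      isNilpotent_of_rSocle_le_rAnnI hacc hess
        (rSocle_le_rAnnI fun k hk ↦ hFmin k hk (I.smul_mem y hx) k rfl)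
  have : IsSemisimpleModule R (R ⧸ I) := by
    rw [show I = _ from lAnnI_eq_iInf _]
    exact isSemisimpleModule_quotient_iInf_of_isCoatom fun k ↦ hmin.isCoatom_lAnnI (hF k k.2)
  intro a
  obtain ⟨b, hb⟩ := exists_sub_mul_mul_mem_of_isSemisimpleModule I a
  exact ⟨b, hIJ _ hb⟩
end
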